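/- There exists a subset T of (ℕ ⊕ Unit)^ω that is clopen in the product topology (hence completely monitorable) but does not have bounded discriminating prefixes: for every n there is a finite word of length n that is neither a good nor a bad prefix for T. One such T is the set of traces of the form d₀ d₁ … d_k # u where d₀ > d₁ > … > d_k is a strictly decreasing sequence of naturals, # is the unit symbol, and u is arbitrary. -/

import Mathlib

/-- A finite trace `w` is an initial segment of the infinite trace `t`. -/
def Extends {A : Type*} (w : List A) (t : ℕ → A) : Prop :=
  ∀ i : Fin w.length, t i.1 = w.get i

/-- `w` is a good prefix for `T`: every infinite trace extending `w` is in `T`. -/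
def GoodPrefix {A : Type*} (T : Set (ℕ → A)) (w : List A) : Prop :=
  ∀ t : ℕ → A, Extends w t → t ∈ T

/-- `w` is a bad prefix for `T`: no infinite trace extending `w` is in `T`. -/
def BadPrefix {A : Type*} (T : Set (ℕ → A)) (w : List A) : Prop :=
  ∀ t : ℕ → A, Extends w t → t ∉ T

/-- Traces over `ℕ ⊕ Unit` that start with a (possibly empty) strictly decreasing
block of naturals immediately followed by the symbol `#` (the unit element). -/
def DecBlock : Set (ℕ → (ℕ ⊕ Unit)) :=
  {t | ∃ (k : ℕ) (f : ℕ → ℕ),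
    t k = Sum.inr () ∧ (∀ i < k, t i = Sum.inl (f i)) ∧
    (∀ i j : ℕ, i < j → j < k → f j < f i)}

/-!
`DecBlock` is the union over `k` of the sets `decBlockOfLength k` of traces whose `#` sits at
position `k`. Each of these depends only on the first `k + 1` letters, hence is clopen, and the
family is locally finite: a strictly decreasing block starting with `d` has length at most
`d + 1`, so the first letter of a trace bounds the `k` that are possible near it. A locally
finite union of clopen sets is clopen. On the other hand the countdown `n - 1, …, 1, 0` can be
completed both by `#` and by never emitting `#`, so it is neither a good nor a bad prefix.
-/

open Set

theorem DependsOn.isLocallyConstant {ι β : Type*} {α : ι → Type*} [∀ i, TopologicalSpace (α i)]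
    [∀ i, DiscreteTopology (α i)] {f : (Π i, α i) → β} {s : Set ι} (hs : s.Finite)
    (hf : DependsOn f s) : IsLocallyConstant f :=
  (IsLocallyConstant.iff_eventually_eq f).2 fun x => by
    filter_upwards [set_pi_mem_nhds hs fun i _ => (isOpen_discrete {x i}).mem_nhds rfl]
      with y hy using hf hy

theorem isClopen_of_dependsOn {ι : Type*} {α : ι → Type*} [∀ i, TopologicalSpace (α i)]
    [∀ i, DiscreteTopology (α i)] {S : Set (Π i, α i)} {s : Set ι} (hs : s.Finite)
    (hS : DependsOn (· ∈ S) s) : IsClopen S := by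
  simpa using (hS.isLocallyConstant hs).isClopen_fiber True

theorem add_le_of_strictly_decreasing {f : ℕ → ℕ} {k : ℕ}
    (hf : ∀ i j, i < j → j < k → f j < f i) {i : ℕ} (hi : i < k) : f i + i ≤ f 0 := by
  induction i with
  | zero => simp
  | succ i ih => have := hf i (i + 1) i.lt_succ_self hi; have := ih (by omega); omega

def decBlockOfLength (k : ℕ) : Set (ℕ → ℕ ⊕ Unit) :=
  {t | ∃ f : ℕ → ℕ, t k = Sum.inr () ∧ (∀ i < k, t i = Sum.inl (f i)) ∧
    ∀ i j : ℕ, i < j → j < k → f j < f i}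

theorem decBlock_eq_iUnion : DecBlock = ⋃ k, decBlockOfLength k :=
  Set.ext fun _ => (mem_iUnion (s := decBlockOfLength)).symm

theorem mem_decBlockOfLength_of_eqOn {k : ℕ} {x y : ℕ → ℕ ⊕ Unit} (hxy : ∀ i ≤ k, x i = y i)
    (hx : x ∈ decBlockOfLength k) : y ∈ decBlockOfLength k := by
  obtain ⟨f, hk, hf, hd⟩ := hx
  exact ⟨f, hxy k le_rfl ▸ hk, fun i hi => hxy i hi.le ▸ hf i hi, hd⟩

theorem dependsOn_mem_decBlockOfLength (k : ℕ) :
    DependsOn (· ∈ decBlockOfLength k) (Iic k) := fun _ _ hxy =>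
  propext ⟨mem_decBlockOfLength_of_eqOn hxy,
    mem_decBlockOfLength_of_eqOn fun i hi => (hxy i hi).symm⟩

theorem isClopen_decBlockOfLength (k : ℕ) : IsClopen (decBlockOfLength k) :=
  isClopen_of_dependsOn (finite_Iic k) (dependsOn_mem_decBlockOfLength k)

theorem le_of_mem_decBlockOfLength {k : ℕ} {t : ℕ → ℕ ⊕ Unit} (ht : t ∈ decBlockOfLength k) :
    k ≤ Sum.elim (· + 1) (fun _ => 0) (t 0) := by
  obtain ⟨f, -, hf, hd⟩ := ht
  cases k with
  | zero => exact Nat.zero_le _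
  | succ k =>
    rw [hf 0 k.succ_pos]
    have := add_le_of_strictly_decreasing hd k.lt_succ_self
    simp only [Sum.elim_inl]
    omega

theorem locallyFinite_decBlockOfLength : LocallyFinite decBlockOfLength := fun t =>
  ⟨(· 0) ⁻¹' {t 0}, (isOpen_discrete {t 0}).preimage (continuous_apply 0) |>.mem_nhds rfl,
    (finite_Iic (Sum.elim (· + 1) (fun _ => 0) (t 0))).subset fun _ ⟨_, hk, h0⟩ =>
      h0 ▸ le_of_mem_decBlockOfLength hk⟩

theorem isClopen_decBlock : IsClopen DecBlock := by
  rw [decBlock_eq_iUnion]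
  exact ⟨locallyFinite_decBlockOfLength.isClosed_iUnion fun k =>
      (isClopen_decBlockOfLength k).isClosed,
    isOpen_iUnion fun k => (isClopen_decBlockOfLength k).isOpen⟩

theorem extends_ofFn {A : Type*} {n : ℕ} {g : Fin n → A} {t : ℕ → A}
    (h : ∀ i : Fin n, t i = g i) : Extends (List.ofFn g) t := fun i => by
  simpa using h ⟨i, by simpa using i.isLt⟩

theorem exists_countdown_not_goodPrefix_not_badPrefix (n : ℕ) :
    ∃ w : List (ℕ ⊕ Unit), w.length = n ∧ ¬GoodPrefix DecBlock w ∧ ¬BadPrefix DecBlock w := by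
  refine ⟨List.ofFn fun i : Fin n => Sum.inl (n - 1 - i), List.length_ofFn, ?_, ?_⟩
  · intro hgood
    obtain ⟨_, _, hk, _⟩ := hgood (fun i => Sum.inl (n - 1 - i)) (extends_ofFn fun _ => rfl)
    exact Sum.inl_ne_inr hk
  · intro hbad
    refine hbad (fun i => if i < n then Sum.inl (n - 1 - i) else Sum.inr ())
      (extends_ofFn fun i => if_pos i.isLt) ⟨n, fun i => n - 1 - i, if_neg n.lt_irrefl,
        fun i hi => if_pos hi, fun i j hij hjn => show n - 1 - j < n - 1 - i by omega⟩

theorem clopen_without_bounded_discriminating_prefixes :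
    IsClopen DecBlock ∧
    (∀ n : ℕ, ∃ w : List (ℕ ⊕ Unit),
      w.length = n ∧ ¬GoodPrefix DecBlock w ∧ ¬BadPrefix DecBlock w) :=
  ⟨isClopen_decBlock, exists_countdown_not_goodPrefix_not_badPrefix⟩
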